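/- Let δ ∈ (0,1) and let V ∈ ℝ^n have independent coordinates with E[V_i] = 0, Var(V_i) = n^{-2}. Let W₀ ∈ ℝ^{n×n} and z ∈ ℝ^n be fixed (independent of V) with coordinate bound |(W₀z)_i| ≤ Z̄ for all i. Suppose ŷ satisfies ŷ ≥ Z̲ > 0, and the SignSGD dynamics satisfy |Vᵀ W_{t+1} z - Vᵀ W_t z| ≤ ηZ̄ for all t. Then with probability at least 1 - n^{-1+2δ}, for every T ≤ η^{-1}(ŷ/Z̄ - n^{-δ}) and every t ≤ T, sign(Vᵀ W_t z - ŷ) = sign(Vᵀ W_0 z - ŷ). -/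

import Mathlib

open MeasureTheory ProbabilityTheory

/-- Entrywise sign: `sgn x = 1` if `x ≥ 0`, `-1` otherwise. -/
noncomputable def sgn (x : ℝ) : ℝ := if 0 ≤ x then 1 else -1

/-- Constant loss derivative sign in the initial training phase: with mean-field random
`V` (independent coordinates, mean `0`, variance `n⁻²`), fixed `W₀, z` with
`|(W₀z)_i| ≤ Z̄`, target `ŷ ≥ Z̲ > 0`, and SignSGD dynamics changing the output
`a_t = Vᵀ W_t z` by at most `η Z̄` per step, with probability at least `1 - n^{-1+2δ}`
the sign of `a_t - ŷ` stays equal to its initial value for all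
`t ≤ T ≤ η⁻¹(ŷ/Z̄ - n^{-δ})`. -/
theorem constant_sign_initial_phase {Ω : Type*} [MeasureSpace Ω]
    [IsProbabilityMeasure (ℙ : Measure Ω)]
    (n : ℕ) (hn : 0 < n) (δ : ℝ) (hδ : δ ∈ Set.Ioo (0 : ℝ) 1)
    (V : Fin n → Ω → ℝ)
    (hVmeas : ∀ i, Measurable (V i))
    (hL2 : ∀ i, MemLp (V i) 2 ℙ)
    (hindep : iIndepFun V ℙ)
    (hmean : ∀ i, ∫ ω, V i ω = 0)
    (hvar : ∀ i, variance (V i) ℙ = ((n : ℝ) ^ 2)⁻¹)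
    (W₀ : Matrix (Fin n) (Fin n) ℝ) (z : Fin n → ℝ)
    (Zhi : ℝ) (hWz : ∀ i, |W₀.mulVec z i| ≤ Zhi)
    (yhat Zlo : ℝ) (hZlo : 0 < Zlo) (hy : Zlo ≤ yhat)
    (η : ℝ) (hη : 0 < η)
    (a : ℕ → Ω → ℝ)  -- `a t ω = Vᵀ W_t z`
    (hameas : ∀ t, Measurable (a t))
    (ha0 : ∀ ω, a 0 ω = ∑ i, V i ω * W₀.mulVec z i)
    (hstep : ∀ t ω, |a (t + 1) ω - a t ω| ≤ η * Zhi) :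
    1 - (n : ℝ) ^ (-1 + 2 * δ)
      ≤ (ℙ {ω | ∀ T : ℕ, (T : ℝ) ≤ η⁻¹ * (yhat / Zhi - (n : ℝ) ^ (-δ)) →
          ∀ t ≤ T, sgn (a t ω - yhat) = sgn (a 0 ω - yhat)}).toReal := by
  have hn' : (0 : ℝ) < n := Nat.cast_pos.mpr hn
  have hnd : (0 : ℝ) < (n : ℝ) ^ (-δ) := Real.rpow_pos_of_pos hn' _
  have hyhat : 0 < yhat := hZlo.trans_le hy
  set S : Set Ω := {ω | ∀ T : ℕ, (T : ℝ) ≤ η⁻¹ * (yhat / Zhi - (n : ℝ) ^ (-δ)) →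
          ∀ t ≤ T, sgn (a t ω - yhat) = sgn (a 0 ω - yhat)} with hS
  have hZhi0 : 0 ≤ Zhi := le_trans (abs_nonneg _) (hWz ⟨0, hn⟩)
  rcases eq_or_lt_of_le hZhi0 with hZ0 | hZpos
  · -- Zhi = 0 : bound is negative, S = univ
    have hSuniv : S = Set.univ := by
      ext ω; simp only [hS, Set.mem_setOf_eq, Set.mem_univ, iff_true]
      intro T hT
      exfalso
      have : yhat / Zhi - (n : ℝ) ^ (-δ) < 0 := by
        rw [← hZ0, div_zero]; linarith
      have : η⁻¹ * (yhat / Zhi - (n : ℝ) ^ (-δ)) < 0 :=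
        mul_neg_of_pos_of_neg (inv_pos.mpr hη) this
      have h0 : (0:ℝ) ≤ (T:ℝ) := Nat.cast_nonneg T
      linarith
    rw [hSuniv, measure_univ, ENNReal.toReal_one]
    have : 0 ≤ (n : ℝ) ^ (-1 + 2 * δ) := (Real.rpow_pos_of_pos hn' _).le
    linarith
  · -- main case
    set c : ℝ := Zhi * (n : ℝ) ^ (-δ) with hc
    have hcpos : 0 < c := mul_pos hZpos hnd
    -- the random variable a 0 as a sum
    set X : Fin n → Ω → ℝ := fun i ω => W₀.mulVec z i * V i ω with hX
    have hXL2 : ∀ i, MemLp (X i) 2 ℙ := fun i => (hL2 i).const_mul _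
    have hsum : a 0 = ∑ i, X i := by
      ext ω; rw [ha0]; simp only [hX, Finset.sum_apply]
      exact Finset.sum_congr rfl fun i _ => mul_comm _ _
    have hL2a : MemLp (a 0) 2 ℙ := by
      rw [hsum]; exact memLp_finset_sum' _ fun i _ => hXL2 i
    -- mean zero
    have hmean0 : ∫ ω, a 0 ω = 0 := by
      rw [hsum]
      simp only [Finset.sum_apply]
      rw [integral_finset_sum _ fun i _ => ((hXL2 i).integrable one_le_two)]
      refine Finset.sum_eq_zero fun i _ => ?_
      simp only [hX]
      rw [integral_const_mul, hmean i, mul_zero]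
    -- variance
    have hvar0 : variance (a 0) ℙ ≤ Zhi ^ 2 / n := by
      rw [hsum]
      rw [IndepFun.variance_sum (fun i _ => hXL2 i)
        (fun i _ j _ hij => (hindep.indepFun hij).comp
          (measurable_const_mul _) (measurable_const_mul _))]
      have : ∀ i : Fin n, variance (X i) ℙ ≤ Zhi ^ 2 * ((n:ℝ)^2)⁻¹ := by
        intro i
        rw [show X i = fun ω => W₀.mulVec z i * V i ω from rfl, variance_const_mul, hvar i]
        have hb : (W₀.mulVec z i)^2 ≤ Zhi ^ 2 := by
          rw [← sq_abs]
          exact pow_le_pow_left₀ (abs_nonneg _) (hWz i) 2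
        exact mul_le_mul_of_nonneg_right hb (by positivity)
      calc ∑ i, variance (X i) ℙ ≤ ∑ _i : Fin n, Zhi ^ 2 * ((n:ℝ)^2)⁻¹ :=
            Finset.sum_le_sum fun i _ => this i
        _ = n * (Zhi ^ 2 * ((n:ℝ)^2)⁻¹) := by simp [Finset.sum_const, Finset.card_univ]
        _ = Zhi ^ 2 / n := by field_simp
    -- Chebyshev
    have hcheb : ℙ {ω | c ≤ |a 0 ω - (∫ ω, a 0 ω)|} ≤ ENNReal.ofReal ((n:ℝ) ^ (-1 + 2*δ)) := by
      refine (meas_ge_le_variance_div_sq hL2a hcpos).trans ?_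
      apply ENNReal.ofReal_le_ofReal
      have hc2 : c ^ 2 = Zhi ^ 2 * (n:ℝ) ^ (-(2*δ)) := by
        rw [hc, mul_pow, ← Real.rpow_natCast ((n:ℝ) ^ (-δ)) 2, ← Real.rpow_mul hn'.le]
        congr 1
        push_cast; ring
      have h2d : (n:ℝ)^(2*δ) * (n:ℝ)^(-(2*δ)) = 1 := by
        rw [← Real.rpow_add hn']; norm_num
      rw [div_le_iff₀ (by positivity)]
      calc variance (a 0) ℙ ≤ Zhi ^ 2 / n := hvar0
        _ = (n:ℝ) ^ (-1 + 2*δ) * (Zhi ^ 2 * (n:ℝ) ^ (-(2*δ))) := by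
            rw [Real.rpow_add hn', Real.rpow_neg_one]
            field_simp
            linear_combination (-1) * h2d
        _ = (n:ℝ) ^ (-1 + 2*δ) * c ^ 2 := by rw [hc2]
    rw [hmean0] at hcheb
    simp only [sub_zero] at hcheb
    -- the good event
    set B : Set Ω := {ω | c ≤ |a 0 ω|} with hB
    have hBmeas : MeasurableSet B :=
      measurableSet_le measurable_const ((hameas 0).abs)
    have hsub : Bᶜ ⊆ S := by
      intro ω hω
      simp only [hB, Set.mem_compl_iff, Set.mem_setOf_eq, not_le] at hω
      intro T hT t ht
      -- yhat/Zhi - n^{-δ} ≥ ηT ≥ 0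
      have hbound : (T : ℝ) * (η * Zhi) ≤ yhat - c := by
        have h1 : η * (T : ℝ) ≤ yhat / Zhi - (n:ℝ)^(-δ) := by
          have := mul_le_mul_of_nonneg_left hT hη.le
          rwa [← mul_assoc, mul_inv_cancel₀ hη.ne', one_mul] at this
        have := mul_le_mul_of_nonneg_right h1 hZpos.le
        calc (T:ℝ) * (η * Zhi) = (η * T) * Zhi := by ring
          _ ≤ (yhat / Zhi - (n:ℝ)^(-δ)) * Zhi := this
          _ = yhat - c := by rw [hc, sub_mul, div_mul_cancel₀ _ hZpos.ne', mul_comm]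
      have hcy : c ≤ yhat := by
        have hTnn : (0:ℝ) ≤ (T:ℝ) * (η * Zhi) := by positivity
        linarith
      have ha0lt : a 0 ω < c := lt_of_le_of_lt (le_abs_self _) hω
      -- |a t - a 0| ≤ t η Zhi
      have hdrift : ∀ s : ℕ, |a s ω - a 0 ω| ≤ s * (η * Zhi) := by
        intro s
        induction s with
        | zero => simp
        | succ k ih =>
          calc |a (k+1) ω - a 0 ω| ≤ |a (k+1) ω - a k ω| + |a k ω - a 0 ω| :=
                abs_sub_le _ _ _
            _ ≤ η * Zhi + k * (η * Zhi) := add_le_add (hstep k ω) ih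
            _ = (k+1 : ℕ) * (η * Zhi) := by push_cast; ring
      have hat : a t ω - yhat < 0 := by
        have h1 : a t ω - a 0 ω ≤ t * (η * Zhi) := le_trans (le_abs_self _) (hdrift t)
        have h2 : (t : ℝ) * (η * Zhi) ≤ (T : ℝ) * (η * Zhi) :=
          mul_le_mul_of_nonneg_right (by exact_mod_cast ht) (by positivity)
        linarith
      have ha0t : a 0 ω - yhat < 0 := by linarith
      rw [sgn, sgn, if_neg (not_le.mpr hat), if_neg (not_le.mpr ha0t)]
    -- measure bound
    have h1 : (ℙ B).toReal ≤ (n:ℝ) ^ (-1 + 2*δ) := by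
      have := ENNReal.toReal_mono (by finiteness) hcheb
      rwa [ENNReal.toReal_ofReal (by positivity)] at this
    have h2 : (ℙ Bᶜ).toReal = 1 - (ℙ B).toReal := by
      rw [measure_compl hBmeas (measure_ne_top _ _), measure_univ,
        ENNReal.toReal_sub_of_le prob_le_one ENNReal.one_ne_top, ENNReal.toReal_one]
    have h3 : (ℙ Bᶜ).toReal ≤ (ℙ S).toReal :=
      ENNReal.toReal_mono (measure_ne_top _ _) (measure_mono hsub)
    linarith
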